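/- arXiv:2004.04028 — 2 statements merged into one kernel-verified Lean document; each statement's English description precedes it below -/
import Mathlib

section
/- Let (S,s) be an involutive solution of the Pentagon Equation. Then (S,s) is cocommutative, i.e., s₁₃s₂₃ = s₂₃s₁₃; equivalently, xθ_y(z) = xz and θ_x ∘ θ_y = θ_y ∘ θ_x for all x,y,z ∈ S. -/
def pentMap12 {S : Type*} (s : S × S → S × S) : S × S × S → S × S × S :=
  fun p => ((s (p.1, p.2.1)).1, (s (p.1, p.2.1)).2, p.2.2)

def pentMap23 {S : Type*} (s : S × S → S × S) : S × S × S → S × S × S :=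
  fun p => (p.1, s (p.2.1, p.2.2))

def pentMap13 {S : Type*} (s : S × S → S × S) : S × S × S → S × S × S :=
  fun p => ((s (p.1, p.2.2)).1, p.2.1, (s (p.1, p.2.2)).2)

/-- `s` is a set-theoretic solution of the Pentagon Equation: s₂₃ s₁₃ s₁₂ = s₁₂ s₂₃. -/
def IsPentagonSolution {S : Type*} (s : S × S → S × S) : Prop :=
  pentMap23 s ∘ pentMap13 s ∘ pentMap12 s = pentMap12 s ∘ pentMap23 s

/-- The map t = τ s τ. -/
def flipConj {S : Type*} (s : S × S → S × S) : S × S → S × S :=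
  fun p => Prod.swap (s (p.2, p.1))

/-- `s` is a solution of the Reversed Pentagon Equation: for t = τsτ, t₁₂ t₁₃ t₂₃ = t₂₃ t₁₂. -/
def IsRPESolution {S : Type*} (s : S × S → S × S) : Prop :=
  pentMap12 (flipConj s) ∘ pentMap13 (flipConj s) ∘ pentMap23 (flipConj s) =
    pentMap23 (flipConj s) ∘ pentMap12 (flipConj s)

/-!
Write `a = s₁₂`, `b = s₂₃`, `c = s₁₃`; all three are involutions because `s` is. The Pentagon
Equation `b c a = a b` then gives `c = b a b a`, and `c² = 1` says `(b a)⁴ = 1`, which is exactly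
`c b = b a b a b = a b a = b c`. Comparing components of `s₁₃ s₂₃ = s₂₃ s₁₃` yields the two
identities for `mul` and `θ`.
-/

open Function

theorem Function.Involutive.comp_comm_of_comp_comp_eq {α : Type*} {f g h : α → α}
    (hf : Involutive f) (hg : Involutive g) (hh : Involutive h) (H : g ∘ h ∘ f = f ∘ g) :
    h ∘ g = g ∘ h := by
  have h_eq : ∀ x, h x = g (f (g (f x))) := fun x => by
    simpa only [comp_apply, hf x, hg (h x)] using congrArg g (congrFun H (f x))
  have gf_pow_four : ∀ x, g (f (g (f (g (f (g (f x))))))) = x := fun x => by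
    simpa only [h_eq] using hh x
  funext x
  simpa only [comp_apply, h_eq, hf _, hg _] using gf_pow_four (f (g (f x)))

section

variable {S : Type*} {s : S × S → S × S}

theorem pentMap12_involutive (hs : Involutive s) : Involutive (pentMap12 s) := by
  rintro ⟨x, y, z⟩
  simp only [pentMap12, Prod.mk.eta, hs _]

theorem pentMap23_involutive (hs : Involutive s) : Involutive (pentMap23 s) := by
  rintro ⟨x, y, z⟩
  simp only [pentMap23, Prod.mk.eta, hs _]

theorem pentMap13_involutive (hs : Involutive s) : Involutive (pentMap13 s) := by
  rintro ⟨x, y, z⟩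
  simp only [pentMap13, Prod.mk.eta, hs _]

theorem IsPentagonSolution.pentMap13_comm_pentMap23 (hPE : IsPentagonSolution s)
    (hs : Involutive s) : pentMap13 s ∘ pentMap23 s = pentMap23 s ∘ pentMap13 s :=
  (pentMap12_involutive hs).comp_comm_of_comp_comp_eq (pentMap23_involutive hs)
    (pentMap13_involutive hs) hPE

theorem pentMap13_comm_pentMap23_iff {mul θ : S → S → S}
    (hs : ∀ x y, s (x, y) = (mul x y, θ x y)) :
    pentMap13 s ∘ pentMap23 s = pentMap23 s ∘ pentMap13 s ↔
      (∀ x y z, mul x (θ y z) = mul x z) ∧ ∀ x y, θ x ∘ θ y = θ y ∘ θ x := by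
  simp only [funext_iff, Prod.forall, comp_apply, pentMap13, pentMap23, hs, Prod.mk.injEq]
  constructor
  · intro H
    exact ⟨fun x y z => (H x y z).1, fun x y z => (H x y z).2.2⟩
  · rintro ⟨hmul, hθ⟩ x y z
    exact ⟨hmul x y z, (hmul y x z).symm, hθ x y z⟩

end

theorem involutive_pentagon_cocommutative {S : Type*} (mul θ : S → S → S)
    (s : S × S → S × S) (hs : ∀ x y, s (x, y) = (mul x y, θ x y))
    (hPE : IsPentagonSolution s) (hinv : s ∘ s = id) :
    pentMap13 s ∘ pentMap23 s = pentMap23 s ∘ pentMap13 s ∧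
      (∀ x y z : S, mul x (θ y z) = mul x z) ∧
      (∀ x y : S, θ x ∘ θ y = θ y ∘ θ x) := by
  have hcomm := hPE.pentMap13_comm_pentMap23 (fun p => congrFun hinv p)
  exact ⟨hcomm, (pentMap13_comm_pentMap23_iff hs).mp hcomm⟩
end

section
/- Let (S,s) be an involutive solution of the Pentagon Equation, and define x ~ y iff θ_x = θ_y. Then ~ is a congruence on the semigroup S, the quotient S̄ = S/~ is a left zero semigroup, and the induced map s̄(x̄,ȳ) = (x̄, θ_x(y)‾) is a well-defined involutive solution of the Pentagon Equation on S̄ (the retract Ret(S,s)). -/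
/-- The retract relation x ~ y iff θ_x = θ_y, as a setoid. -/
def retractSetoid {S : Type*} (θ : S → S → S) : Setoid S :=
  ⟨fun x y => θ x = θ y, ⟨fun _ => rfl, Eq.symm, Eq.trans⟩⟩

/-!
Since `s` is an involution, so are `s₁₂`, `s₁₃`, `s₂₃`, and inverting both sides of the
pentagon equation `s₂₃ s₁₃ s₁₂ = s₁₂ s₂₃` gives `s₁₂ s₁₃ s₂₃ = s₂₃ s₁₂`. Its components give
`θ_{θ_x y} = θ_x θ_y` and `θ_{x θ_y z}(y z) = θ_x(y) z`. At `(x, w c, θ_w c)` the latter reads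
`θ_{x c}(w) = θ_x(w c) θ_w(c)`, which is `θ_x(w)` by the middle component of
`s₁₃ s₁₂ = s₂₃ s₁₂ s₂₃`. So `~` is compatible with both `mul` and `θ`, the quotient map intertwines `s`
with `s̄`, and the pentagon equation and involutivity descend along this surjection.
-/

open Function

section Descent

variable {S T : Type*} {s : S × S → S × S} {t : T × T → T × T} {f : S → T}

theorem Function.Semiconj.pentMap12 (h : Semiconj (Prod.map f f) s t) :
    Semiconj (Prod.map f (Prod.map f f)) (pentMap12 s) (pentMap12 t) := by
  rintro ⟨x, y, z⟩
  have hxy : t (f x, f y) = Prod.map f f (s (x, y)) := (h.eq (x, y)).symm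
  simp only [_root_.pentMap12, Prod.map_apply, hxy, Prod.map_fst, Prod.map_snd]

theorem Function.Semiconj.pentMap13 (h : Semiconj (Prod.map f f) s t) :
    Semiconj (Prod.map f (Prod.map f f)) (pentMap13 s) (pentMap13 t) := by
  rintro ⟨x, y, z⟩
  have hxz : t (f x, f z) = Prod.map f f (s (x, z)) := (h.eq (x, z)).symm
  simp only [_root_.pentMap13, Prod.map_apply, hxz, Prod.map_fst, Prod.map_snd]

theorem Function.Semiconj.pentMap23 (h : Semiconj (Prod.map f f) s t) :
    Semiconj (Prod.map f (Prod.map f f)) (pentMap23 s) (pentMap23 t) := by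
  rintro ⟨x, y, z⟩
  have hyz : t (f y, f z) = Prod.map f f (s (y, z)) := (h.eq (y, z)).symm
  simp only [_root_.pentMap23, Prod.map_apply, hyz]

theorem Function.Semiconj.isPentagonSolution (h : Semiconj (Prod.map f f) s t)
    (hf : Surjective f) (hPE : IsPentagonSolution s) : IsPentagonSolution t := by
  have hlhs := h.pentMap23.comp_right (h.pentMap13.comp_right h.pentMap12)
  have hrhs := h.pentMap12.comp_right h.pentMap23
  funext q
  obtain ⟨p, rfl⟩ := hf.prodMap (hf.prodMap hf) q
  rw [← hlhs.eq, ← hrhs.eq, hPE]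

theorem Function.Semiconj.involutive {α β : Type*} {f : α → β} {ga : α → α} {gb : β → β}
    (h : Semiconj f ga gb) (hf : Surjective f) (hga : Involutive ga) : Involutive gb := by
  intro y
  obtain ⟨x, rfl⟩ := hf y
  rw [← h.eq, ← h.eq, hga]

end Descent

section InvolutivePentagon

variable {S : Type*} {s : S × S → S × S}

theorem Function.Involutive.pentMap12 (h : Involutive s) : Involutive (pentMap12 s) := by
  rintro ⟨x, y, z⟩
  simp only [_root_.pentMap12, Prod.mk.eta, h _]

theorem Function.Involutive.pentMap13 (h : Involutive s) : Involutive (pentMap13 s) := by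
  rintro ⟨x, y, z⟩
  simp only [_root_.pentMap13, Prod.mk.eta, h _]

theorem Function.Involutive.pentMap23 (h : Involutive s) : Involutive (pentMap23 s) := by
  rintro ⟨x, y, z⟩
  simp only [_root_.pentMap23, Prod.mk.eta, h _]

theorem IsPentagonSolution.pentMap13_comp_pentMap12 (h : IsPentagonSolution s)
    (hinv : Involutive s) :
    pentMap13 s ∘ pentMap12 s = pentMap23 s ∘ pentMap12 s ∘ pentMap23 s := by
  funext p
  rw [comp_apply, eq_comm, comp_apply, hinv.pentMap23.eq_iff]
  exact (congrFun h p).symm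

theorem IsPentagonSolution.reverse (h : IsPentagonSolution s) (hinv : Involutive s) :
    pentMap12 s ∘ pentMap13 s ∘ pentMap23 s = pentMap23 s ∘ pentMap12 s := by
  funext p
  have hq := congrFun h (pentMap23 s (pentMap12 s p))
  simp only [comp_apply, hinv.pentMap23 _, hinv.pentMap12 _] at hq ⊢
  rw [hinv.pentMap12.eq_iff, hinv.pentMap13.eq_iff, hinv.pentMap23.eq_iff, hq]

end InvolutivePentagon

section Components

variable {S : Type*} {mul θ : S → S → S} {s : S × S → S × S}

theorem mul_mul_theta (hs : ∀ x y, s (x, y) = (mul x y, θ x y)) (hinv : Involutive s)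
    (x y : S) : mul (mul x y) (θ x y) = x := by
  simpa only [hs] using congrArg Prod.fst (hinv (x, y))

theorem theta_mul_theta (hs : ∀ x y, s (x, y) = (mul x y, θ x y)) (hinv : Involutive s)
    (x y : S) : θ (mul x y) (θ x y) = y := by
  simpa only [hs] using congrArg Prod.snd (hinv (x, y))

theorem theta_eq_mul_theta_theta (hs : ∀ x y, s (x, y) = (mul x y, θ x y))
    (hinv : Involutive s) (hPE : IsPentagonSolution s) (x y z : S) :
    θ x y = mul (θ x (mul y z)) (θ y z) := by
  have h := congrFun (hPE.pentMap13_comp_pentMap12 hinv) (x, y, z)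
  simp only [comp_apply, pentMap12, pentMap13, pentMap23, hs, Prod.mk.injEq] at h
  exact h.2.1

theorem theta_mul_theta_mul (hs : ∀ x y, s (x, y) = (mul x y, θ x y))
    (hinv : Involutive s) (hPE : IsPentagonSolution s) (x y z : S) :
    θ (mul x (θ y z)) (mul y z) = mul (θ x y) z := by
  have h := congrFun (hPE.reverse hinv) (x, y, z)
  simp only [comp_apply, pentMap12, pentMap13, pentMap23, hs, Prod.mk.injEq] at h
  exact h.2.1

theorem theta_theta (hs : ∀ x y, s (x, y) = (mul x y, θ x y))
    (hinv : Involutive s) (hPE : IsPentagonSolution s) (x y : S) :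
    θ (θ x y) = θ x ∘ θ y := by
  funext z
  have h := congrFun (hPE.reverse hinv) (x, y, z)
  simp only [comp_apply, pentMap12, pentMap13, pentMap23, hs, Prod.mk.injEq] at h
  exact h.2.2.symm

theorem theta_mul (hs : ∀ x y, s (x, y) = (mul x y, θ x y))
    (hinv : Involutive s) (hPE : IsPentagonSolution s) (x c : S) :
    θ (mul x c) = θ x := by
  funext w
  have h := theta_mul_theta_mul hs hinv hPE x (mul w c) (θ w c)
  rwa [theta_mul_theta hs hinv, mul_mul_theta hs hinv,
    ← theta_eq_mul_theta_theta hs hinv hPE] at h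

end Components

theorem retract_is_involutive_solution {S : Type*} (mul θ : S → S → S)
    (s : S × S → S × S) (hs : ∀ x y, s (x, y) = (mul x y, θ x y))
    (hPE : IsPentagonSolution s) (hinv : s ∘ s = id) :
    (∀ x x' y y' : S, θ x = θ x' → θ y = θ y' → θ (mul x y) = θ (mul x' y')) ∧
    ∃ sbar : Quotient (retractSetoid θ) × Quotient (retractSetoid θ) →
        Quotient (retractSetoid θ) × Quotient (retractSetoid θ),
      (∀ x y : S, sbar (Quotient.mk (retractSetoid θ) x, Quotient.mk (retractSetoid θ) y) =
          (Quotient.mk (retractSetoid θ) (mul x y), Quotient.mk (retractSetoid θ) (θ x y))) ∧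
      (∀ x y : S, Quotient.mk (retractSetoid θ) (mul x y) = Quotient.mk (retractSetoid θ) x) ∧
      IsPentagonSolution sbar ∧ sbar ∘ sbar = id := by
  have hs_inv : Involutive s := congrFun hinv
  have hθ_mul := theta_mul hs hs_inv hPE
  have hmul_congr : ∀ x x' y y' : S, θ x = θ x' → θ y = θ y' → θ (mul x y) = θ (mul x' y') :=
    fun x x' y y' hx _ => by rw [hθ_mul, hθ_mul, hx]
  have hθ_congr : ∀ x x' y y' : S, θ x = θ x' → θ y = θ y' → θ (θ x y) = θ (θ x' y') :=
    fun x x' y y' hx hy => by rw [theta_theta hs hs_inv hPE, theta_theta hs hs_inv hPE, hx, hy]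
  let q := Quotient.mk (retractSetoid θ)
  let sbar : Quotient (retractSetoid θ) × Quotient (retractSetoid θ) →
      Quotient (retractSetoid θ) × Quotient (retractSetoid θ) := fun p =>
    (Quotient.map₂ mul (fun _ _ hx _ _ hy => hmul_congr _ _ _ _ hx hy) p.1 p.2,
      Quotient.map₂ θ (fun _ _ hx _ _ hy => hθ_congr _ _ _ _ hx hy) p.1 p.2)
  have hq : Surjective q := Quotient.mk_surjective
  have hsbar : Semiconj (Prod.map q q) s sbar := fun ⟨x, y⟩ => by
    rw [hs]; rfl
  exact ⟨hmul_congr, sbar, fun _ _ => rfl, fun x y => Quotient.sound (hθ_mul x y),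
    hsbar.isPentagonSolution hq hPE, (hsbar.involutive (hq.prodMap hq) hs_inv).comp_self⟩
end
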